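/- arXiv:2203.03979 — 6 statements merged into one kernel-verified Lean document; each statement's English description precedes it below -/
import Mathlib

section
/- The hard thresholding operator H_λ, defined by (H_λ(w))_k = w_k if |w_k| ≥ λ and 0 otherwise, is the proximal operator of the function w ↦ (λ²/2)·‖w‖₀, i.e., for every z ∈ ℝⁿ, H_λ(z) is a minimizer over w ∈ ℝⁿ of (1/2)‖w − z‖₂² + (λ²/2)‖w‖₀. -/
open Finset
open scoped Classical BigOperators symmDiff

/-- Euclidean (ℓ²) norm of a vector in `ℝⁿ`. -/
noncomputable def norm2 {n : ℕ} (x : Fin n → ℝ) : ℝ := Real.sqrt (∑ i, (x i)^2)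

/-- Support of a vector: the set of indices with nonzero entries. -/
noncomputable def supp {n : ℕ} (x : Fin n → ℝ) : Finset (Fin n) :=
  Finset.univ.filter (fun i => x i ≠ 0)

/-- Hard thresholding operator with threshold `lam`. -/
noncomputable def Hthr {n : ℕ} (lam : ℝ) (x : Fin n → ℝ) : Fin n → ℝ :=
  fun i => if lam ≤ |x i| then x i else 0

lemma obj_eq {n : ℕ} (lam : ℝ) (z w : Fin n → ℝ) :
    (1/2) * (norm2 (w - z))^2 + lam^2/2 * ((supp w).card : ℝ)
      = ∑ i, ((1/2) * (w i - z i)^2 + lam^2/2 * (if w i ≠ 0 then (1:ℝ) else 0)) := by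
  have h1 : (norm2 (w - z))^2 = ∑ i, (w i - z i)^2 := by
    rw [norm2, Real.sq_sqrt (Finset.sum_nonneg fun i _ => sq_nonneg _)]
    simp [Pi.sub_apply]
  have h2 : ((supp w).card : ℝ) = ∑ i, (if w i ≠ 0 then (1:ℝ) else 0) := by
    rw [supp, Finset.card_filter]
    push_cast
    simp
  rw [h1, h2, Finset.sum_add_distrib, Finset.mul_sum, Finset.mul_sum]

/-- Hard thresholding is the proximal operator of `w ↦ (λ²/2)‖w‖₀`. -/
theorem stmt_0 {n : ℕ} (lam : ℝ) (hlam : 0 < lam) (z : Fin n → ℝ) (w : Fin n → ℝ) :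
    (1/2) * (norm2 (Hthr lam z - z))^2 + lam^2/2 * ((supp (Hthr lam z)).card : ℝ) ≤
      (1/2) * (norm2 (w - z))^2 + lam^2/2 * ((supp w).card : ℝ) := by
  rw [obj_eq, obj_eq]
  apply Finset.sum_le_sum
  intro i _
  simp only [Hthr]
  by_cases hz : lam ≤ |z i|
  · have hzne : z i ≠ 0 := by
      intro h; rw [h] at hz; simp only [abs_zero] at hz; linarith
    simp only [if_pos hz, if_pos hzne]
    have hsq : lam^2 ≤ (z i)^2 := by
      nlinarith [sq_abs (z i), abs_nonneg (z i)]
    by_cases hw : w i = 0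
    · rw [hw, if_neg (fun h => h rfl)]
      nlinarith
    · rw [if_pos hw]
      nlinarith [sq_nonneg (w i - z i)]
  · have habs : |z i| < lam := not_le.mp hz
    have hz2 : (z i)^2 < lam^2 := by
      nlinarith [sq_abs (z i), abs_nonneg (z i)]
    simp only [if_neg hz]; rw [if_neg (fun h => h rfl)]
    by_cases hw : w i = 0
    · rw [hw, if_neg (fun h => h rfl)]
    · rw [if_pos hw]
      nlinarith [sq_nonneg (w i - z i)]
end

section
/- For any vectors x, y ∈ ℝⁿ and λ > 0, ‖H_λ(x) − H_λ(y)‖₂ ≤ ‖x − y‖₂ + λ·√|S_x △ S_y|, where S_x = supp(H_λ(x)), S_y = supp(H_λ(y)), and S_x △ S_y denotes the symmetric difference of these index sets. -/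
/-!
Coordinatewise, `|H_λ(x)_i − H_λ(y)_i| ≤ |x_i − y_i|` when `x_i` and `y_i` are on the same side of
the threshold, and otherwise one of the two entries is killed while the other survives, so the
difference exceeds `|x_i − y_i|` by at most the killed entry, which is below `λ`. The mismatched
indices are exactly `S_x △ S_y`, and Minkowski's inequality adds up the two bounds.
-/

open Finset
open scoped Classical BigOperators symmDiff

section Norm2

variable {n : ℕ}

lemma norm2_eq_norm_toLp (x : Fin n → ℝ) : norm2 x = ‖WithLp.toLp 2 x‖ := by
  simp [norm2, EuclideanSpace.norm_eq, sq_abs]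

lemma norm2_mono {a b : Fin n → ℝ} (h : ∀ i, |a i| ≤ |b i|) : norm2 a ≤ norm2 b :=
  Real.sqrt_le_sqrt <| sum_le_sum fun i _ => sq_le_sq.mpr (h i)

lemma norm2_abs (a : Fin n → ℝ) : norm2 (fun i => |a i|) = norm2 a := by
  simp [norm2, sq_abs]

lemma norm2_le_add_of_abs_le {a b c : Fin n → ℝ} (h : ∀ i, |a i| ≤ |b i| + |c i|) :
    norm2 a ≤ norm2 b + norm2 c :=
  calc norm2 a ≤ norm2 ((fun i => |b i|) + fun i => |c i|) :=
        norm2_mono fun i => (h i).trans (le_abs_self _)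
    _ ≤ norm2 (fun i => |b i|) + norm2 (fun i => |c i|) := by
        simp only [norm2_eq_norm_toLp, WithLp.toLp_add]
        exact norm_add_le _ _
    _ = norm2 b + norm2 c := by rw [norm2_abs, norm2_abs]

lemma norm2_ite_mem (s : Finset (Fin n)) (c : ℝ) :
    norm2 (fun i => if i ∈ s then c else 0) = |c| * Real.sqrt s.card := by
  have hsum : ∑ i, (if i ∈ s then c else 0) ^ 2 = s.card * c ^ 2 := by
    simp [ite_pow, sum_ite_mem]
  rw [norm2, hsum, Real.sqrt_mul (Nat.cast_nonneg _), Real.sqrt_sq_eq_abs, mul_comm]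

end Norm2

section Hthr

variable {n : ℕ} {lam : ℝ}

lemma mem_supp_Hthr (hlam : 0 < lam) (x : Fin n → ℝ) (i : Fin n) :
    i ∈ supp (Hthr lam x) ↔ lam ≤ |x i| := by
  by_cases h : lam ≤ |x i|
  · have hx : x i ≠ 0 := fun hx => by simp [hx] at h; linarith
    simp [supp, Hthr, h, hx]
  · simp [supp, Hthr, h]

lemma mem_symmDiff_supp_Hthr (hlam : 0 < lam) (x y : Fin n → ℝ) (i : Fin n) :
    i ∈ supp (Hthr lam x) ∆ supp (Hthr lam y) ↔ ¬(lam ≤ |x i| ↔ lam ≤ |y i|) := by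
  rw [mem_symmDiff, mem_supp_Hthr hlam, mem_supp_Hthr hlam]
  tauto

lemma abs_Hthr_sub_le_of_iff {x y : Fin n → ℝ} {i : Fin n} (h : lam ≤ |x i| ↔ lam ≤ |y i|) :
    |Hthr lam x i - Hthr lam y i| ≤ |x i - y i| := by
  by_cases hx : lam ≤ |x i|
  · simp [Hthr, hx, h.mp hx]
  · simp [Hthr, hx, mt h.mpr hx]

lemma abs_Hthr_sub_le_of_not_iff {x y : Fin n → ℝ} {i : Fin n}
    (h : ¬(lam ≤ |x i| ↔ lam ≤ |y i|)) :
    |Hthr lam x i - Hthr lam y i| ≤ |x i - y i| + lam := by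
  by_cases hx : lam ≤ |x i|
  · have hy : ¬lam ≤ |y i| := by tauto
    simp only [Hthr, hx, hy, if_true, if_false, sub_zero]
    linarith [abs_sub_abs_le_abs_sub (x i) (y i), not_le.mp hy]
  · have hy : lam ≤ |y i| := by tauto
    simp only [Hthr, hx, hy, if_true, if_false, zero_sub, abs_neg]
    linarith [abs_sub_abs_le_abs_sub (y i) (x i), abs_sub_comm (x i) (y i), not_le.mp hx]

lemma abs_Hthr_sub_le (hlam : 0 < lam) (x y : Fin n → ℝ) (i : Fin n) :
    |Hthr lam x i - Hthr lam y i| ≤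
      |x i - y i| + |if i ∈ supp (Hthr lam x) ∆ supp (Hthr lam y) then lam else 0| := by
  by_cases h : lam ≤ |x i| ↔ lam ≤ |y i|
  · rw [if_neg fun hi => (mem_symmDiff_supp_Hthr hlam x y i).mp hi h, abs_zero, add_zero]
    exact abs_Hthr_sub_le_of_iff h
  · rw [if_pos ((mem_symmDiff_supp_Hthr hlam x y i).mpr h), abs_of_pos hlam]
    exact abs_Hthr_sub_le_of_not_iff h

end Hthr

/-- Perturbation bound for hard thresholding:
`‖H_λ(x) − H_λ(y)‖₂ ≤ ‖x − y‖₂ + λ √|S_x △ S_y|`. -/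
theorem stmt_1 {n : ℕ} (lam : ℝ) (hlam : 0 < lam) (x y : Fin n → ℝ) :
    norm2 (Hthr lam x - Hthr lam y) ≤
      norm2 (x - y) + lam * Real.sqrt (((supp (Hthr lam x)) ∆ (supp (Hthr lam y))).card : ℝ) := by
  calc norm2 (Hthr lam x - Hthr lam y)
      ≤ norm2 (x - y) +
          norm2 (fun i => if i ∈ supp (Hthr lam x) ∆ supp (Hthr lam y) then lam else 0) :=
        norm2_le_add_of_abs_le (abs_Hthr_sub_le hlam x y)
    _ = _ := by rw [norm2_ite_mem, abs_of_pos hlam]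
end

section
/- Suppose w ∈ ℝⁿ satisfies w = H_λ(w − Gᵀ(Gw − b)) for a matrix G ∈ ℝ^{m×n}, vector b ∈ ℝᵐ, and λ > 0. Then, with S = supp(w), every nonzero entry of w has absolute value at least λ: min_{i∈S} |w_i| ≥ λ. -/
open Finset
open scoped Classical BigOperators symmDiff

/-- A fixed point of the proximal gradient map has all nonzero entries of size ≥ λ. -/
theorem stmt_2 {m n : ℕ} (G : Matrix (Fin m) (Fin n) ℝ) (b : Fin m → ℝ) (lam : ℝ)
    (hlam : 0 < lam) (w : Fin n → ℝ)
    (hfix : w = Hthr lam (w - G.transpose.mulVec (G.mulVec w - b))) :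
    ∀ i ∈ supp w, lam ≤ |w i| := by
  intro i hi
  have hne : w i ≠ 0 := by simpa [supp] using hi
  have h := congrFun hfix i
  unfold Hthr at h
  by_cases hc : lam ≤ |(w - G.transpose.mulVec (G.mulVec w - b)) i|
  · rw [if_pos hc] at h; rw [h]; exact hc
  · rw [if_neg hc] at h; exact absurd h hne
end

section
/- Suppose w ∈ ℝⁿ satisfies w = H_λ(w − Gᵀ(Gw − b)). Then with S = supp(w), the restriction w_S minimizes z ↦ ‖G_S z − b‖₂² over z ∈ ℝ^{|S|}, i.e., G_Sᵀ G_S w_S = G_Sᵀ b, and moreover for every i ∉ S, |G_iᵀ(Gw − b)| < λ. -/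
open Finset
open scoped Classical BigOperators symmDiff

/-- A fixed point of the proximal gradient map satisfies the normal equations on its
support `S` (i.e. `G_Sᵀ G_S w_S = G_Sᵀ b`), and off the support the correlations of the
residual with the columns of `G` are strictly below `λ`. -/
theorem stmt_3 {m n : ℕ} (G : Matrix (Fin m) (Fin n) ℝ) (b : Fin m → ℝ) (lam : ℝ)
    (hlam : 0 < lam) (w : Fin n → ℝ)
    (hfix : w = Hthr lam (w - G.transpose.mulVec (G.mulVec w - b))) :
    (∀ i ∈ supp w, ∑ j, G j i * (G.mulVec w - b) j = 0) ∧
    (∀ i ∉ supp w, |∑ j, G j i * (G.mulVec w - b) j| < lam) := by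
  have key : ∀ i, ∑ j, G j i * (G.mulVec w - b) j
      = G.transpose.mulVec (G.mulVec w - b) i := by
    intro i
    simp only [Matrix.mulVec, dotProduct, Matrix.transpose_apply]
  set u : Fin n → ℝ := G.transpose.mulVec (G.mulVec w - b) with hu
  have h : ∀ i, w i = if lam ≤ |w i - u i| then w i - u i else 0 := by
    intro i
    have := congrFun hfix i
    simpa [Hthr, Pi.sub_apply] using this
  constructor
  · intro i hi
    have hne : w i ≠ 0 := by simpa [supp] using hi
    rw [key]
    by_cases hc : lam ≤ |w i - u i|
    · have := h i; rw [if_pos hc] at this; linarith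
    · exfalso; apply hne; rw [h i, if_neg hc]
  · intro i hi
    have hz : w i = 0 := by
      by_contra hne
      exact hi (by simpa [supp] using hne)
    rw [key]
    by_cases hc : lam ≤ |w i - u i|
    · exfalso
      have := h i; rw [if_pos hc] at this
      have hv : w i - u i = 0 := by linarith
      rw [hv] at hc; simp at hc; linarith
    · push_neg at hc
      rw [hz] at hc
      simpa [abs_sub_comm] using hc
end

section
/- Conversely to the fixed-point characterization: suppose w ∈ ℝⁿ with S = supp(w) satisfies G_Sᵀ G_S w_S = G_Sᵀ b, max_{i∈Sᶜ} |G_iᵀ(Gw − b)| < λ, and min_{i∈S} |w_i| ≥ λ. Then w is a fixed point of the proximal gradient map with unit stepsize: w = H_λ(w − Gᵀ(Gw − b)). -/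
open Finset
open scoped Classical BigOperators symmDiff

/-- Converse: normal equations on the support, small off-support correlations, and
entries of size ≥ λ imply that `w` is a fixed point of the proximal gradient map. -/
theorem stmt_4 {m n : ℕ} (G : Matrix (Fin m) (Fin n) ℝ) (b : Fin m → ℝ) (lam : ℝ)
    (hlam : 0 < lam) (w : Fin n → ℝ)
    (hLS : ∀ i ∈ supp w, ∑ j, G j i * (G.mulVec w - b) j = 0)
    (hoff : ∀ i ∉ supp w, |∑ j, G j i * (G.mulVec w - b) j| < lam)
    (hbig : ∀ i ∈ supp w, lam ≤ |w i|) :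
    w = Hthr lam (w - G.transpose.mulVec (G.mulVec w - b)) := by
  funext i
  have harg : (w - G.transpose.mulVec (G.mulVec w - b)) i
      = w i - ∑ j, G j i * (G.mulVec w - b) j := by
    simp [Matrix.mulVec, Matrix.transpose, dotProduct, mul_sub, Finset.sum_sub_distrib]
  by_cases hi : i ∈ supp w
  · have h0 := hLS i hi
    rw [Hthr, harg, h0, sub_zero, if_pos (hbig i hi)]
  · have hw : w i = 0 := by
      by_contra h
      exact hi (by simp [supp, h])
    have := hoff i hi
    rw [Hthr, harg, hw, zero_sub, abs_neg, if_neg (not_le.mpr this)]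
end

section
/- Let w ∈ ℝⁿ be a fixed point of the proximal gradient map w = H_λ(w − Gᵀ(Gw − b)), and let S = supp(w). Then w is a local minimizer of F(v) = (1/2)‖Gv − b‖₂² + (λ²/2)‖v‖₀: there exists ε > 0 such that F(w + η) ≥ F(w) for all η with ‖η‖₂ < ε. -/
open Finset
open scoped Classical BigOperators symmDiff

lemma norm2_sq {k : ℕ} (x : Fin k → ℝ) : (norm2 x)^2 = ∑ i, (x i)^2 :=
  Real.sq_sqrt (Finset.sum_nonneg fun i _ => sq_nonneg _)

lemma abs_le_norm2 {k : ℕ} (x : Fin k → ℝ) (i : Fin k) : |x i| ≤ norm2 x := by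
  have h : (x i)^2 ≤ ∑ j, (x j)^2 :=
    Finset.single_le_sum (fun j _ => sq_nonneg (x j)) (Finset.mem_univ i)
  calc |x i| = Real.sqrt ((x i)^2) := (Real.sqrt_sq_eq_abs _).symm
    _ ≤ norm2 x := Real.sqrt_le_sqrt h

/-- A fixed point of the proximal gradient map is a local minimizer of
`F(v) = (1/2)‖Gv − b‖₂² + (λ²/2)‖v‖₀`. -/
theorem stmt_5 {m n : ℕ} (G : Matrix (Fin m) (Fin n) ℝ) (b : Fin m → ℝ) (lam : ℝ)
    (hlam : 0 < lam) (w : Fin n → ℝ)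
    (hfix : w = Hthr lam (w - G.transpose.mulVec (G.mulVec w - b)))
    (F : (Fin n → ℝ) → ℝ)
    (hF : ∀ v, F v = (1/2) * (norm2 (G.mulVec v - b))^2 + lam^2/2 * ((supp v).card : ℝ)) :
    ∃ ε > 0, ∀ η : Fin n → ℝ, norm2 η < ε → F w ≤ F (w + η) := by
  classical
  set r : Fin m → ℝ := G.mulVec w - b with hr
  set g : Fin n → ℝ := G.transpose.mulVec r with hg
  -- key dichotomy from the fixed-point equation
  have hkey : ∀ i, (g i = 0 ∧ lam ≤ |w i|) ∨ (w i = 0 ∧ |g i| ≤ lam) := by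
    intro i
    have h := congrFun hfix i
    simp only [Hthr, Pi.sub_apply] at h
    by_cases hc : lam ≤ |w i - g i|
    · rw [if_pos hc] at h
      left
      refine ⟨?_, ?_⟩
      · linarith [h]
      · have hg0 : g i = 0 := by linarith [h]
        rw [hg0, sub_zero] at hc
        exact hc
    · rw [if_neg hc] at h
      right
      refine ⟨h, ?_⟩
      rw [h, zero_sub, abs_neg] at hc
      linarith
  refine ⟨lam / 2, by linarith, fun η hη => ?_⟩
  set q : Fin m → ℝ := G.mulVec η with hq
  have habs : ∀ i, |η i| < lam / 2 := fun i => lt_of_le_of_lt (abs_le_norm2 η i) hη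
  -- supports
  set S : Finset (Fin n) := supp w with hS
  set S' : Finset (Fin n) := supp (w + η) with hS'
  have hSsub : S ⊆ S' := by
    intro i hi
    have hwi : w i ≠ 0 := by
      rw [hS, supp, Finset.mem_filter] at hi
      exact hi.2
    have hlami : lam ≤ |w i| := by
      rcases hkey i with ⟨_, h2⟩ | ⟨h1, _⟩
      · exact h2
      · exact absurd h1 hwi
    have : w i + η i ≠ 0 := by
      intro h0
      have : |w i| = |η i| := by
        have : w i = -η i := by linarith
        rw [this, abs_neg]
      have := habs i
      linarith
    rw [hS', supp, Finset.mem_filter]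
    exact ⟨Finset.mem_univ i, by simpa using this⟩
  set T : Finset (Fin n) := S' \ S with hT
  have hcard : (S'.card : ℝ) = S.card + T.card := by
    have h1 : T.card = S'.card - S.card := Finset.card_sdiff_of_subset hSsub
    have h2 : S.card ≤ S'.card := Finset.card_le_card hSsub
    have : S'.card = S.card + T.card := by omega
    exact_mod_cast this
  -- inner product identity : ∑ j, r j * q j = ∑ i, g i * η i
  have hswap : ∑ j, r j * q j = ∑ i, g i * η i := by
    have h1 : ∀ j, q j = ∑ i, G j i * η i := fun j => by
      simp [hq, Matrix.mulVec, dotProduct]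
    have h2 : ∀ i, g i = ∑ j, G j i * r j := fun i => by
      simp [hg, Matrix.mulVec, dotProduct, Matrix.transpose_apply]
    calc ∑ j, r j * q j = ∑ j, ∑ i, r j * (G j i * η i) := by
          simp only [h1, Finset.mul_sum]
      _ = ∑ i, ∑ j, r j * (G j i * η i) := Finset.sum_comm
      _ = ∑ i, g i * η i := by
          refine Finset.sum_congr rfl fun i _ => ?_
          rw [h2, Finset.sum_mul]
          exact Finset.sum_congr rfl fun j _ => by ring
  -- expansion of the quadratic term
  have hexp : ∑ j, ((G.mulVec (w + η) - b) j)^2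
      = ∑ j, (r j)^2 + 2 * ∑ i, g i * η i + ∑ j, (q j)^2 := by
    have h1 : ∀ j, (G.mulVec (w + η) - b) j = r j + q j := by
      intro j
      simp [hr, hq, Matrix.mulVec_add]
      ring
    rw [← hswap]
    simp only [h1]
    rw [Finset.mul_sum, ← Finset.sum_add_distrib, ← Finset.sum_add_distrib]
    exact Finset.sum_congr rfl fun j _ => by ring
  -- bound on the linear term
  have hlin : -(lam^2 / 2) * T.card ≤ ∑ i, g i * η i := by
    have hvanish : ∀ i ∈ Finset.univ, i ∉ T → g i * η i = 0 := by
      intro i _ hiT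
      by_cases hw : w i = 0
      · by_cases hi' : i ∈ S'
        · exfalso
          apply hiT
          rw [hT, Finset.mem_sdiff]
          refine ⟨hi', ?_⟩
          simp [hS, supp, hw]
        · have : w i + η i = 0 := by
            by_contra hne
            exact hi' (by simp [hS', supp, hne])
          have : η i = 0 := by rw [hw] at this; linarith
          simp [this]
      · rcases hkey i with ⟨h1, _⟩ | ⟨h1, _⟩
        · simp [h1]
        · exact absurd h1 hw
    have hsum : ∑ i, g i * η i = ∑ i ∈ T, g i * η i :=
      (Finset.sum_subset (Finset.subset_univ T) hvanish).symm
    rw [hsum]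
    have hterm : ∀ i ∈ T, -(lam^2 / 2) ≤ g i * η i := by
      intro i hiT
      have hiS : i ∉ S := (Finset.mem_sdiff.mp hiT).2
      have hw : w i = 0 := by
        by_contra hne
        exact hiS (by simp [hS, supp, hne])
      have hgi : |g i| ≤ lam := by
        rcases hkey i with ⟨_, h2⟩ | ⟨_, h2⟩
        · exfalso; rw [hw, abs_zero] at h2; linarith
        · exact h2
      have h1 : |g i * η i| ≤ lam * (lam / 2) := by
        rw [abs_mul]
        have := (habs i).le
        have hgnn := abs_nonneg (g i)
        have hηnn := abs_nonneg (η i)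
        nlinarith
      have := neg_abs_le (g i * η i)
      nlinarith
    calc -(lam^2 / 2) * T.card = ∑ _i ∈ T, -(lam^2 / 2) := by
          rw [Finset.sum_const, nsmul_eq_mul]; ring
      _ ≤ ∑ i ∈ T, g i * η i := Finset.sum_le_sum hterm
  have hq2 : 0 ≤ ∑ j, (q j)^2 := Finset.sum_nonneg fun j _ => sq_nonneg _
  -- put it together
  rw [hF, hF, norm2_sq, norm2_sq]
  have hrw : (G.mulVec w - b) = r := hr.symm
  rw [hrw]
  show (1:ℝ)/2 * (∑ j, (r j)^2) + lam^2/2 * (S.card : ℝ)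
      ≤ 1/2 * (∑ j, ((G.mulVec (w+η) - b) j)^2) + lam^2/2 * (S'.card : ℝ)
  rw [hexp, hcard]
  nlinarith [hlin, hq2]
end
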